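/- Let Ω ⊆ ℂ^d be a bounded domain whose Bergman metric g_Ω satisfies: there is a C² function λ : Ω → ℝ with (1/C)·g_Ω ≤ L(λ) ≤ C·g_Ω and ‖∂λ‖_{L(λ)} ≤ 1. If σ_{d-q+1}(g_{Ω,z}) → ∞ as z → ∂Ω, then Ω satisfies McNeal's condition (P̃_q): for each M > 0 there is a C² plurisubharmonic λ_M with ‖∂λ_M‖_{L(λ_M)} ≤ 1 and σ_{d-q+1}(L(λ_M)) ≥ M outside a compact subset of Ω. -/

import Mathlib

open Complex MeasureTheory Metric Set
open scoped ENNReal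

noncomputable section

/-- `ℂ^d` with the Euclidean norm. -/
abbrev Ed (d : ℕ) := EuclideanSpace ℂ (Fin d)

instance (d : ℕ) : MeasurableSpace (Ed d) := borel _
instance (d : ℕ) : BorelSpace (Ed d) := ⟨rfl⟩
instance (d : ℕ) : MeasureSpace (Ed d) :=
  ⟨(volume : Measure (Fin d → ℂ)).map ((WithLp.equiv 2 (Fin d → ℂ)).symm)⟩

/-- The Bergman kernel of `Ω` on the diagonal:
`B_Ω(z,z) = sup {|f(z)|² : f holomorphic on Ω, ∫_Ω |f|² ≤ 1}`. -/
def bergmanDiag {d : ℕ} (Ω : Set (Ed d)) (z : Ed d) : ℝ :=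
  sSup { y : ℝ | ∃ f : Ed d → ℂ, DifferentiableOn ℂ f Ω ∧
    (∫ w in Ω, ‖f w‖ ^ 2) ≤ 1 ∧ y = ‖f z‖ ^ 2 }

/-- The `i`-th standard basis vector of `ℂ^d`. -/
def basisVec (d : ℕ) (i : Fin d) : Ed d := EuclideanSpace.single i 1

/-- The Wirtinger derivative `∂f/∂z_i`. -/
def wderiv {d : ℕ} (i : Fin d) (f : Ed d → ℂ) (z : Ed d) : ℂ :=
  (1/2) * (fderiv ℝ f z (basisVec d i) - Complex.I * fderiv ℝ f z (Complex.I • basisVec d i))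

/-- The Wirtinger derivative `∂f/∂z̄_i`. -/
def wbarderiv {d : ℕ} (i : Fin d) (f : Ed d → ℂ) (z : Ed d) : ℂ :=
  (1/2) * (fderiv ℝ f z (basisVec d i) + Complex.I * fderiv ℝ f z (Complex.I • basisVec d i))

/-- The matrix `[∂²f/∂z_i∂z̄_j]` of a real-valued function `f`. -/
def leviMatrix {d : ℕ} (f : Ed d → ℝ) (z : Ed d) : Matrix (Fin d) (Fin d) ℂ :=
  fun i j => wderiv i (fun w => wbarderiv j (fun u => (f u : ℂ)) w) z

/-- The Levi form `L(f)(ξ,ξ) = Σ_{i,j} (∂²f/∂z_i∂z̄_j) ξ_i ξ̄_j`. -/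
def leviForm {d : ℕ} (f : Ed d → ℝ) (z : Ed d) (ξ : Ed d) : ℂ :=
  ∑ i, ∑ j, leviMatrix f z i j * ξ i * (starRingEnd ℂ) (ξ j)

/-- The `(1,0)`-form `∂f` applied to a vector `ξ`. -/
def delForm {d : ℕ} (f : Ed d → ℝ) (z : Ed d) (ξ : Ed d) : ℂ :=
  ∑ i, wderiv i (fun w => (f w : ℂ)) z * ξ i

/-- The Bergman metric of `Ω` at `z`, as the matrix `[∂² log B_Ω(z,z)/∂z_i∂z̄_j]`. -/
def bergmanMetricMatrix {d : ℕ} (Ω : Set (Ed d)) (z : Ed d) : Matrix (Fin d) (Fin d) ℂ :=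
  leviMatrix (fun w => Real.log (bergmanDiag Ω w)) z

/-- The Bergman metric of `Ω` as a quadratic form: `g_{Ω,z}(ξ,ξ)`. -/
def bergmanMetric {d : ℕ} (Ω : Set (Ed d)) (z ξ : Ed d) : ℝ :=
  (leviForm (fun w => Real.log (bergmanDiag Ω w)) z ξ).re

/-- The (infinitesimal) Kobayashi metric of `Ω`. -/
def kobayashi {d : ℕ} (Ω : Set (Ed d)) (z v : Ed d) : ℝ :=
  sInf { r : ℝ | ∃ (ξ : ℂ) (φ : ℂ → Ed d), DifferentiableOn ℂ φ (ball 0 1) ∧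
    MapsTo φ (ball 0 1) Ω ∧ φ 0 = z ∧ ξ • deriv φ 0 = v ∧ r = ‖ξ‖ }

/-- Auxiliary: the nonnegative part of an extended real number, in `ℝ≥0∞`. -/
def erealToENNReal (x : EReal) : ℝ≥0∞ := if x = ⊤ then ⊤ else ENNReal.ofReal x.toReal

/-- A nonpositive plurisubharmonic function on `Ω` (values in `EReal`, `⊥ = -∞` allowed):
upper semicontinuous and satisfying the sub-mean value inequality on complex disks. -/
def NegPSHOn {d : ℕ} (u : Ed d → EReal) (Ω : Set (Ed d)) : Prop :=
  (∀ z ∈ Ω, u z ≤ 0) ∧ UpperSemicontinuousOn u Ω ∧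
  ∀ z ∈ Ω, ∀ v : Ed d, (∀ c : ℂ, ‖c‖ ≤ 1 → z + c • v ∈ Ω) →
    (∫⁻ θ in Set.Ioc (0:ℝ) (2 * Real.pi),
        erealToENNReal (-(u (z + Complex.exp (θ * Complex.I) • v)))) ≤
      ENNReal.ofReal (2 * Real.pi) * erealToENNReal (-(u z))

/-- The pluricomplex Green function `G_Ω(z,w)` of `Ω` with pole at `w`. -/
def greenFunction {d : ℕ} (Ω : Set (Ed d)) (z w : Ed d) : EReal :=
  sSup { y : EReal | ∃ u : Ed d → EReal, NegPSHOn u Ω ∧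
    (∃ C : ℝ, ∀ᶠ x in nhdsWithin w {w}ᶜ, x ∈ Ω → u x ≤ ((Real.log ‖x - w‖ + C : ℝ) : EReal)) ∧
    y = u z }

-- The extended logarithm `log‖w‖`, equal to `-∞` at `w = 0`.
open scoped Classical in
def elog {d : ℕ} (w : Ed d) : EReal := if w = 0 then ⊥ else ((Real.log ‖w‖ : ℝ) : EReal)

/-- The distance on `Ω` induced by a (pointwise quadratic-form) metric `g`: the infimum of
lengths of `C¹` curves in `Ω` joining the two points. -/
def metricDist {d : ℕ} (Ω : Set (Ed d)) (g : Ed d → Ed d → ℝ) (x y : Ed d) : ℝ :=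
  sInf { L : ℝ | ∃ γ : ℝ → Ed d, ContDiffOn ℝ 1 γ (Set.Icc 0 1) ∧
    (∀ t ∈ Set.Icc (0:ℝ) 1, γ t ∈ Ω) ∧ γ 0 = x ∧ γ 1 = y ∧
    L = ∫ t in (0:ℝ)..1, Real.sqrt (g (γ t) (deriv γ t)) }

/-- Iterated Wirtinger derivative `∂^{|a|}/∂z^a` for a multi-index `a`. -/
def wmulti {d : ℕ} (a : Fin d → ℕ) (f : Ed d → ℂ) : Ed d → ℂ :=
  (List.finRange d).foldr (fun i g => (wderiv i)^[a i] g) f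

/-- Iterated conjugate Wirtinger derivative `∂^{|b|}/∂z̄^b` for a multi-index `b`. -/
def wbarmulti {d : ℕ} (b : Fin d → ℕ) (f : Ed d → ℂ) : Ed d → ℂ :=
  (List.finRange d).foldr (fun i g => (wbarderiv i)^[b i] g) f

/-- The Rayleigh quotient of a Hermitian matrix. -/
def rayleigh {d : ℕ} (A : Matrix (Fin d) (Fin d) ℂ) (v : Fin d → ℂ) : ℝ :=
  (dotProduct (star v) (A.mulVec v)).re / (∑ i, Complex.normSq (v i))

/-- `σ_{d-q+1}(A)` via Courant–Fischer: the inf over `q`-dimensional subspaces `V` of the sup of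
the Rayleigh quotient over nonzero `v ∈ V`. -/
def smallEig {d : ℕ} (q : ℕ) (A : Matrix (Fin d) (Fin d) ℂ) : ℝ :=
  sInf { m : ℝ | ∃ V : Submodule ℂ (Fin d → ℂ), Module.finrank ℂ V = q ∧
    m = sSup { r : ℝ | ∃ v ∈ V, v ≠ 0 ∧ r = rayleigh A v } }

/-- A reproducing (Bergman) kernel for the domain `Ω`. -/
structure IsBergmanKernel {d : ℕ} (Ω : Set (Ed d)) (K : Ed d → Ed d → ℂ) : Prop where
  holo_fst : ∀ w ∈ Ω, DifferentiableOn ℂ (fun u => K u w) Ω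
  sq_int : ∀ w ∈ Ω, IntegrableOn (fun u => ‖K u w‖ ^ 2) Ω
  hermitian : ∀ u ∈ Ω, ∀ w ∈ Ω, K w u = (starRingEnd ℂ) (K u w)
  reproducing : ∀ f : Ed d → ℂ, DifferentiableOn ℂ f Ω → IntegrableOn (fun w => ‖f w‖ ^ 2) Ω →
    ∀ z ∈ Ω, f z = ∫ w in Ω, K z w * f w

/-- Pseudoconvexity via a continuous plurisubharmonic exhaustion function. -/
def IsPseudoconvex {d : ℕ} (Ω : Set (Ed d)) : Prop :=
  IsOpen Ω ∧ ∃ u : Ed d → ℝ, ContinuousOn u Ω ∧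
    (∀ z ∈ Ω, ∀ v : Ed d, (∀ c : ℂ, ‖c‖ ≤ 1 → z + c • v ∈ Ω) →
      u z ≤ (2 * Real.pi)⁻¹ * ∫ θ in (0:ℝ)..(2 * Real.pi), u (z + Complex.exp (θ * Complex.I) • v)) ∧
    ∀ c : ℝ, IsCompact { z ∈ Ω | u z ≤ c }

open scoped Classical

/-! Since `σ_{d-q+1}` is monotone under the Rayleigh-quotient order `A ≤ c • B`, the comparison
`g_Ω ≤ C · L(λ)` gives `σ_{d-q+1}(L(λ)) ≥ σ_{d-q+1}(g_Ω) / C`, which tends to infinity at `∂Ω`.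
So `λ` itself witnesses `(P̃_q)` for every `M`, with the compact set chosen for the level `C · M`. -/

theorem Submodule.exists_finrank_eq {K V : Type*} [DivisionRing K] [AddCommGroup V] [Module K V]
    [FiniteDimensional K V] {q : ℕ} (hq : q ≤ Module.finrank K V) :
    ∃ W : Submodule K V, Module.finrank K W = q := by
  let b := Module.finBasis K V
  refine ⟨Submodule.span K (Set.range (b ∘ Fin.castLE hq)), ?_⟩
  rw [finrank_span_eq_card (b.linearIndependent.comp _ (Fin.castLE_injective hq)),
    Fintype.card_fin]

section Rayleigh

variable {d : ℕ}

lemma norm_mul_norm_le_sum_normSq (v : Fin d → ℂ) (i j : Fin d) :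
    ‖v i‖ * ‖v j‖ ≤ ∑ k, Complex.normSq (v k) := by
  have hle : ∀ k, ‖v k‖ ^ 2 ≤ ∑ k, Complex.normSq (v k) := fun k => by
    rw [Complex.sq_norm]
    exact Finset.single_le_sum (fun k _ => Complex.normSq_nonneg (v k)) (Finset.mem_univ k)
  nlinarith [hle i, hle j, norm_nonneg (v i), norm_nonneg (v j), sq_nonneg (‖v i‖ - ‖v j‖)]

lemma rayleigh_le_sum_norm (A : Matrix (Fin d) (Fin d) ℂ) (v : Fin d → ℂ) :
    rayleigh A v ≤ ∑ i, ∑ j, ‖A i j‖ := by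
  set N := ∑ k, Complex.normSq (v k)
  refine div_le_of_le_mul₀ (Finset.sum_nonneg fun k _ => Complex.normSq_nonneg _)
    (by positivity) ?_
  calc (dotProduct (star v) (A.mulVec v)).re
      ≤ ‖dotProduct (star v) (A.mulVec v)‖ := Complex.re_le_norm _
    _ = ‖∑ i, ∑ j, star (v i) * (A i j * v j)‖ := by
        simp only [dotProduct, Matrix.mulVec, Finset.mul_sum, Pi.star_apply]
    _ ≤ ∑ i, ∑ j, ‖A i j‖ * (‖v i‖ * ‖v j‖) := by
        refine (norm_sum_le _ _).trans (Finset.sum_le_sum fun i _ => ?_)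
        refine (norm_sum_le _ _).trans_eq (Finset.sum_congr rfl fun j _ => ?_)
        simp only [norm_mul, norm_star]
        ring
    _ ≤ ∑ i, ∑ j, ‖A i j‖ * N := by
        gcongr with i _ j _
        exact norm_mul_norm_le_sum_normSq v i j
    _ = (∑ i, ∑ j, ‖A i j‖) * N := by simp only [Finset.sum_mul]

lemma bddAbove_rayleigh (A : Matrix (Fin d) (Fin d) ℂ) (V : Submodule ℂ (Fin d → ℂ)) :
    BddAbove {r : ℝ | ∃ v ∈ V, v ≠ 0 ∧ r = rayleigh A v} :=
  ⟨_, by rintro r ⟨v, -, -, rfl⟩; exact rayleigh_le_sum_norm A v⟩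

lemma smallEig_le_mul_smallEig {q : ℕ} (hq1 : 1 ≤ q) (hqd : q ≤ d)
    {A B : Matrix (Fin d) (Fin d) ℂ} {c : ℝ} (hc : 0 < c) (hA : ∀ v, 0 ≤ rayleigh A v)
    (hAB : ∀ v, rayleigh A v ≤ c * rayleigh B v) :
    smallEig q A ≤ c * smallEig q B := by
  rw [← div_le_iff₀' hc]
  obtain ⟨V₀, hV₀⟩ := Submodule.exists_finrank_eq (K := ℂ) (V := Fin d → ℂ) (q := q)
    (by rwa [Module.finrank_fin_fun])
  refine le_csInf ⟨_, V₀, hV₀, rfl⟩ ?_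
  rintro _ ⟨V, hV, rfl⟩
  have hbddBelow : BddBelow {m : ℝ | ∃ V : Submodule ℂ (Fin d → ℂ), Module.finrank ℂ V = q ∧
      m = sSup {r | ∃ v ∈ V, v ≠ 0 ∧ r = rayleigh A v}} := by
    refine ⟨0, ?_⟩
    rintro _ ⟨W, -, rfl⟩
    exact Real.sSup_nonneg (by rintro _ ⟨v, -, -, rfl⟩; exact hA v)
  obtain ⟨v₀, hv₀V, hv₀⟩ := Submodule.exists_mem_ne_zero_of_ne_bot (p := V) (by
    rintro rfl
    rw [finrank_bot] at hV
    omega)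
  rw [div_le_iff₀' hc]
  refine (csInf_le hbddBelow ⟨V, hV, rfl⟩).trans (csSup_le ⟨_, v₀, hv₀V, hv₀, rfl⟩ ?_)
  rintro _ ⟨v, hvV, hv, rfl⟩
  exact (hAB v).trans
    (mul_le_mul_of_nonneg_left (le_csSup (bddAbove_rayleigh B V) ⟨v, hvV, hv, rfl⟩) hc.le)

end Rayleigh

section Levi

variable {d : ℕ}

/-- `leviForm` contracts `ξ` with the row index, so `v̄ᵀ L v` is the Levi form at `v̄`. -/
lemma star_dotProduct_leviMatrix_mulVec (f : Ed d → ℝ) (z : Ed d) (v : Fin d → ℂ) :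
    dotProduct (star v) ((leviMatrix f z).mulVec v) = leviForm f z (WithLp.toLp 2 (star v)) := by
  simp only [leviForm, dotProduct, Matrix.mulVec, Finset.mul_sum,
    Pi.star_apply, starRingEnd_apply, star_star]
  refine Finset.sum_congr rfl fun i _ => Finset.sum_congr rfl fun j _ => ?_
  ring

lemma rayleigh_leviMatrix (f : Ed d → ℝ) (z : Ed d) (v : Fin d → ℂ) :
    rayleigh (leviMatrix f z) v =
      (leviForm f z (WithLp.toLp 2 (star v))).re / ∑ i, Complex.normSq (v i) := by
  rw [rayleigh, star_dotProduct_leviMatrix_mulVec]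

lemma rayleigh_leviMatrix_nonneg {f : Ed d → ℝ} {z : Ed d}
    (hf : ∀ ξ, 0 ≤ (leviForm f z ξ).re) (v : Fin d → ℂ) :
    0 ≤ rayleigh (leviMatrix f z) v := by
  rw [rayleigh_leviMatrix]
  exact div_nonneg (hf _) (Finset.sum_nonneg fun i _ => Complex.normSq_nonneg _)

lemma rayleigh_leviMatrix_le_mul {f g : Ed d → ℝ} {z : Ed d} {c : ℝ}
    (hfg : ∀ ξ, (leviForm f z ξ).re ≤ c * (leviForm g z ξ).re) (v : Fin d → ℂ) :
    rayleigh (leviMatrix f z) v ≤ c * rayleigh (leviMatrix g z) v := by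
  rw [rayleigh_leviMatrix, rayleigh_leviMatrix, mul_div_assoc']
  exact div_le_div_of_nonneg_right (hfg _)
    (Finset.sum_nonneg fun i _ => Complex.normSq_nonneg _)

end Levi

theorem stmt_11_general {d q : ℕ} (hq1 : 1 ≤ q) (hqd : q ≤ d) (Ω : Set (Ed d))
    (C : ℝ) (hC : 0 < C)
    (lam : Ed d → ℝ) (hlam : ContDiffOn ℝ 2 lam Ω)
    (hcomp : ∀ z ∈ Ω, ∀ ξ : Ed d,
      (1/C) * bergmanMetric Ω z ξ ≤ (leviForm lam z ξ).re ∧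
      (leviForm lam z ξ).re ≤ C * bergmanMetric Ω z ξ)
    (hsbg : ∀ z ∈ Ω, ∀ ξ : Ed d, ‖delForm lam z ξ‖ ^ 2 ≤ (leviForm lam z ξ).re)
    (hblow : ∀ M : ℝ, ∃ K : Set (Ed d), IsCompact K ∧ K ⊆ Ω ∧
      ∀ z ∈ Ω \ K, M ≤ smallEig q (bergmanMetricMatrix Ω z)) :
    ∀ M : ℝ, 0 < M → ∃ lamM : Ed d → ℝ, ContDiffOn ℝ 2 lamM Ω ∧
      (∀ z ∈ Ω, ∀ ξ : Ed d, 0 ≤ (leviForm lamM z ξ).re) ∧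
      (∀ z ∈ Ω, ∀ ξ : Ed d, ‖delForm lamM z ξ‖ ^ 2 ≤ (leviForm lamM z ξ).re) ∧
      ∃ K : Set (Ed d), IsCompact K ∧ K ⊆ Ω ∧
        ∀ z ∈ Ω \ K, M ≤ smallEig q (leviMatrix lamM z) := by
  intro M _
  obtain ⟨K, hK, hKΩ, hKM⟩ := hblow (C * M)
  have hL0 : ∀ z ∈ Ω, ∀ ξ, 0 ≤ (leviForm lam z ξ).re := fun z hz ξ =>
    (sq_nonneg _).trans (hsbg z hz ξ)
  refine ⟨lam, hlam, hL0, hsbg, K, hK, hKΩ, fun z hz => ?_⟩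
  have hg0 : ∀ ξ, 0 ≤ bergmanMetric Ω z ξ := fun ξ =>
    (mul_nonneg_iff_of_pos_left hC).mp ((hL0 z hz.1 ξ).trans (hcomp z hz.1 ξ).2)
  have hgL : ∀ ξ, bergmanMetric Ω z ξ ≤ C * (leviForm lam z ξ).re := fun ξ => by
    have h := (hcomp z hz.1 ξ).1
    rwa [one_div, inv_mul_le_iff₀ hC] at h
  have hσ : smallEig q (bergmanMetricMatrix Ω z) ≤ C * smallEig q (leviMatrix lam z) :=
    smallEig_le_mul_smallEig hq1 hqd hC (rayleigh_leviMatrix_nonneg hg0)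
      (rayleigh_leviMatrix_le_mul hgL)
  exact le_of_mul_le_mul_left ((hKM z hz).trans hσ) hC

/-- If the Bergman metric of a bounded domain `Ω` admits a potential with self-bounded complex
gradient comparable to `g_Ω`, and `σ_{d-q+1}(g_{Ω,z}) → ∞` as `z → ∂Ω`, then `Ω` satisfies
McNeal's condition `(P̃_q)`. -/
theorem stmt_11 {d q : ℕ} (hq1 : 1 ≤ q) (hqd : q ≤ d) (Ω : Set (Ed d)) (hΩ : IsOpen Ω)
    (hbdd : Bornology.IsBounded Ω) (C : ℝ) (hC : 0 < C)
    (lam : Ed d → ℝ) (hlam : ContDiffOn ℝ 2 lam Ω)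
    (hcomp : ∀ z ∈ Ω, ∀ ξ : Ed d,
      (1/C) * bergmanMetric Ω z ξ ≤ (leviForm lam z ξ).re ∧
      (leviForm lam z ξ).re ≤ C * bergmanMetric Ω z ξ)
    (hsbg : ∀ z ∈ Ω, ∀ ξ : Ed d, ‖delForm lam z ξ‖ ^ 2 ≤ (leviForm lam z ξ).re)
    (hblow : ∀ M : ℝ, ∃ K : Set (Ed d), IsCompact K ∧ K ⊆ Ω ∧
      ∀ z ∈ Ω \ K, M ≤ smallEig q (bergmanMetricMatrix Ω z)) :
    ∀ M : ℝ, 0 < M → ∃ lamM : Ed d → ℝ, ContDiffOn ℝ 2 lamM Ω ∧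
      (∀ z ∈ Ω, ∀ ξ : Ed d, 0 ≤ (leviForm lamM z ξ).re) ∧
      (∀ z ∈ Ω, ∀ ξ : Ed d, ‖delForm lamM z ξ‖ ^ 2 ≤ (leviForm lamM z ξ).re) ∧
      ∃ K : Set (Ed d), IsCompact K ∧ K ⊆ Ω ∧
        ∀ z ∈ Ω \ K, M ≤ smallEig q (leviMatrix lamM z) :=
  stmt_11_general hq1 hqd Ω C hC lam hlam hcomp hsbg hblow
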